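/- arXiv:2303.00982 — 2 statements merged into one kernel-verified Lean document; each statement's English description precedes it below -/
import Mathlib

section
/- For a real-valued integrable random variable Y and α ∈ (0,1), the lower conditional value-at-risk satisfies: α · CVaR_L(α) = sup over β ∈ ℝ of (β·α + E[min(Y − β, 0)]), with the supremum attained at β* = Q(α), the α-quantile of Y. -/
/-!
The objective `β ↦ β α + E[min (Y - β) 0]` is compared pointwise with its value at `q`: for every
set `s` with `Iio q ⊆ s ⊆ Iic q`, `min (y - β) 0 ≤ min (y - q) 0 + (q - β) 1_s(y)`, so the
objective at `β` exceeds the one at `q` by at most `(q - β) (P(Y ∈ s) - α)`. As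
`P(Y < q) ≤ α ≤ P(Y ≤ q)` at the quantile, taking `s = Iio q` for `β ≤ q` and `s = Iic q` for
`q < β` makes this nonpositive. Splitting `min (Y - q) 0` on `{Y < q}` identifies the value at `q`
with `α · CVaR_L(α)`.
-/

open MeasureTheory ProbabilityTheory Set Filter

theorem Monotone.leftLim_sInf_setOf_le_le {f : ℝ → ℝ} (hf : Monotone f) {α : ℝ}
    (hbdd : BddBelow {x | α ≤ f x}) : Function.leftLim f (sInf {x | α ≤ f x}) ≤ α :=
  _root_.le_of_tendsto (hf.tendsto_leftLim _) <| eventually_nhdsWithin_of_forall fun _ hx =>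
    (not_le.1 fun h => notMem_of_lt_csInf hx hbdd h).le

theorem StieltjesFunction.le_apply_sInf_setOf_le (f : StieltjesFunction ℝ) {α : ℝ}
    (hne : {x | α ≤ f x}.Nonempty) : α ≤ f (sInf {x | α ≤ f x}) := by
  refine ge_of_tendsto ((f.right_continuous _).mono Ioi_subset_Ici_self) ?_
  filter_upwards [self_mem_nhdsWithin] with x hx
  obtain ⟨y, hy, hyx⟩ := exists_lt_of_csInf_lt hne hx
  exact hy.trans (f.mono hyx.le)

namespace ProbabilityTheory

noncomputable def quantile (ν : Measure ℝ) (α : ℝ) : ℝ := sInf {x | α ≤ cdf ν x}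

variable {ν : Measure ℝ} {α : ℝ}

theorem bddBelow_setOf_le_cdf (hα : 0 < α) : BddBelow {x | α ≤ cdf ν x} := by
  obtain ⟨b, hb⟩ :=
    ((tendsto_cdf_atBot ν).eventually (eventually_lt_nhds hα)).exists_forall_of_atBot
  exact ⟨b, fun x hx => le_of_not_gt fun hxb =>
    (hx.trans (monotone_cdf ν hxb.le)).not_gt (hb b le_rfl)⟩

theorem nonempty_setOf_le_cdf (hα : α < 1) : {x | α ≤ cdf ν x}.Nonempty :=
  (((tendsto_cdf_atTop ν).eventually (eventually_gt_nhds hα)).exists).imp fun _ => le_of_lt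

theorem le_cdf_quantile [IsProbabilityMeasure ν] (hα : α < 1) : α ≤ cdf ν (quantile ν α) :=
  (cdf ν).le_apply_sInf_setOf_le (nonempty_setOf_le_cdf hα)

theorem measureReal_Iio_quantile_le [IsProbabilityMeasure ν] (hα : 0 < α) :
    ν.real (Iio (quantile ν α)) ≤ α := by
  have h := (cdf ν).measure_Iio (tendsto_cdf_atBot ν) (quantile ν α)
  rw [measure_cdf, sub_zero] at h
  rw [measureReal_def, h]
  exact ENNReal.toReal_ofReal' ▸
    max_le ((monotone_cdf ν).leftLim_sInf_setOf_le_le (bddBelow_setOf_le_cdf hα)) hα.le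

end ProbabilityTheory

theorem min_sub_zero_le_add_indicator {q : ℝ} {s : Set ℝ} (hs₁ : Iio q ⊆ s) (hs₂ : s ⊆ Iic q)
    (y β : ℝ) : min (y - β) 0 ≤ min (y - q) 0 + s.indicator (fun _ => q - β) y := by
  by_cases hy : y ∈ s
  · rw [indicator_of_mem hy, min_eq_left (a := y - q) (sub_nonpos.2 (hs₂ hy))]
    linarith [min_le_left (y - β) 0]
  · have hqy : q ≤ y := not_lt.1 (hy <| hs₁ ·)
    rw [indicator_of_notMem hy, min_eq_right (a := y - q) (sub_nonneg.2 hqy)]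
    simp

theorem ite_lt_eq_min_sub_zero_add_indicator (y q : ℝ) :
    (if y < q then y else 0) = min (y - q) 0 + (Iio q).indicator (fun _ => q) y := by
  by_cases hy : y < q
  · simp [hy, hy.le]
  · simp [hy, not_lt.1 hy]

namespace MeasureTheory

variable {Ω : Type*} [MeasurableSpace Ω] {μ : Measure Ω} {Y : Ω → ℝ}

theorem Integrable.min_sub_const_zero [IsFiniteMeasure μ] (hY : Integrable Y μ) (β : ℝ) :
    Integrable (fun ω => min (Y ω - β) 0) μ :=
  (hY.sub (integrable_const β)).inf (integrable_zero _ _ _)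

theorem integrable_indicator_const_comp [IsFiniteMeasure μ] (hY : AEMeasurable Y μ) {s : Set ℝ}
    (hs : MeasurableSet s) (c : ℝ) : Integrable (fun ω => s.indicator (fun _ => c) (Y ω)) μ := by
  simp_rw [← indicator_comp_right]
  exact (integrable_const c).indicator₀ (hY.nullMeasurableSet_preimage hs)

theorem integral_indicator_const_comp (hY : AEMeasurable Y μ) {s : Set ℝ}
    (hs : MeasurableSet s) (c : ℝ) :
    ∫ ω, s.indicator (fun _ => c) (Y ω) ∂μ = μ.real (Y ⁻¹' s) * c := by
  simp_rw [← indicator_comp_right]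
  rw [integral_indicator₀ (hY.nullMeasurableSet_preimage hs)]
  exact setIntegral_const c

theorem integral_min_sub_zero_le [IsFiniteMeasure μ] (hY : Integrable Y μ) {s : Set ℝ}
    (hs : MeasurableSet s) (q : ℝ) (hs₁ : Iio q ⊆ s) (hs₂ : s ⊆ Iic q) (β : ℝ) :
    ∫ ω, min (Y ω - β) 0 ∂μ ≤ ∫ ω, min (Y ω - q) 0 ∂μ + μ.real (Y ⁻¹' s) * (q - β) := by
  have hind := integrable_indicator_const_comp hY.aemeasurable hs (q - β)
  rw [← integral_indicator_const_comp hY.aemeasurable hs,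
    ← integral_add (hY.min_sub_const_zero q) hind]
  exact integral_mono (hY.min_sub_const_zero β) ((hY.min_sub_const_zero q).add hind)
    fun ω => min_sub_zero_le_add_indicator hs₁ hs₂ (Y ω) β

theorem add_integral_min_sub_zero_le [IsFiniteMeasure μ] (hY : Integrable Y μ) {α q : ℝ}
    (hlt : μ.real {ω | Y ω < q} ≤ α) (hle : α ≤ μ.real {ω | Y ω ≤ q}) (β : ℝ) :
    β * α + ∫ ω, min (Y ω - β) 0 ∂μ ≤ q * α + ∫ ω, min (Y ω - q) 0 ∂μ := by
  rcases le_or_gt β q with hβ | hβ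
  · have : ∫ ω, min (Y ω - β) 0 ∂μ ≤ ∫ ω, min (Y ω - q) 0 ∂μ + μ.real {ω | Y ω < q} * (q - β) :=
      integral_min_sub_zero_le hY measurableSet_Iio q subset_rfl Iio_subset_Iic_self β
    linarith [mul_le_mul_of_nonneg_right hlt (sub_nonneg.2 hβ)]
  · have : ∫ ω, min (Y ω - β) 0 ∂μ ≤ ∫ ω, min (Y ω - q) 0 ∂μ + μ.real {ω | Y ω ≤ q} * (q - β) :=
      integral_min_sub_zero_le hY measurableSet_Iic q Iio_subset_Iic_self subset_rfl β
    linarith [mul_le_mul_of_nonpos_right hle (sub_nonpos.2 hβ.le)]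

theorem integral_ite_lt_eq [IsFiniteMeasure μ] (hY : Integrable Y μ) (q : ℝ) :
    ∫ ω, (if Y ω < q then Y ω else 0) ∂μ =
      ∫ ω, min (Y ω - q) 0 ∂μ + μ.real {ω | Y ω < q} * q := by
  simp_rw [ite_lt_eq_min_sub_zero_add_indicator]
  rw [integral_add (hY.min_sub_const_zero q)
    (integrable_indicator_const_comp hY.aemeasurable measurableSet_Iio q),
    integral_indicator_const_comp hY.aemeasurable measurableSet_Iio]
  rfl

end MeasureTheory

theorem cvar_lower_dual_general {Ω : Type*} [MeasurableSpace Ω] (μ : Measure Ω)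
    [IsProbabilityMeasure μ] (Y : Ω → ℝ) (hInt : Integrable Y μ)
    (α : ℝ) (hα : α ∈ Set.Ioo (0 : ℝ) 1)
    (F : ℝ → ℝ) (hF : ∀ β, F β = (μ {ω | Y ω ≤ β}).toReal)
    (q : ℝ) (hq : q = sInf {β : ℝ | α ≤ F β})
    (CVaRL : ℝ)
    (hC : CVaRL = (1 / α) *
      ((∫ ω, (if Y ω < q then Y ω else 0) ∂μ) + q * (α - (μ {ω | Y ω < q}).toReal))) :
    (α * CVaRL = q * α + ∫ ω, min (Y ω - q) 0 ∂μ) ∧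
      ∀ β : ℝ, β * α + ∫ ω, min (Y ω - β) 0 ∂μ ≤ α * CVaRL := by
  obtain ⟨hα₀, hα₁⟩ := hα
  set ν := μ.map Y
  have : IsProbabilityMeasure ν := Measure.isProbabilityMeasure_map hInt.aemeasurable
  have hν : ∀ s, MeasurableSet s → ν.real s = μ.real (Y ⁻¹' s) :=
    fun _ => map_measureReal_apply_of_aemeasurable hInt.aemeasurable
  have hq_quantile : q = quantile ν α := by
    have hF_cdf : F = cdf ν := funext fun β => by rw [hF, cdf_eq_real, hν _ measurableSet_Iic]; rfl
    rw [hq, hF_cdf]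
    rfl
  have hlt : μ.real {ω | Y ω < q} ≤ α := by
    rw [hq_quantile]
    exact (hν _ measurableSet_Iio).symm.trans_le (measureReal_Iio_quantile_le hα₀)
  have hle : α ≤ μ.real {ω | Y ω ≤ q} := by
    rw [hq_quantile]
    exact (le_cdf_quantile hα₁).trans_eq ((cdf_eq_real ν _).trans (hν _ measurableSet_Iic))
  have hdual : α * CVaRL = q * α + ∫ ω, min (Y ω - q) 0 ∂μ := by
    rw [hC, integral_ite_lt_eq hInt, ← measureReal_def]
    field_simp
    ring
  exact ⟨hdual, fun β => hdual ▸ add_integral_min_sub_zero_le hInt hlt hle β⟩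

/-- Dual representation of the lower conditional value-at-risk:
`α · CVaR_L(α) = sup_{β ∈ ℝ} (β·α + E[min(Y − β, 0)])`, with the supremum attained at
the `α`-quantile `q = inf{β : F(β) ≥ α}`. Here `CVaR_L(α)` is the mean of the lower
`α`-tail of `Y`, i.e. `(1/α)·(E[Y·1{Y < q}] + q·(α − P(Y < q)))`. -/
theorem cvar_lower_dual {Ω : Type*} [MeasurableSpace Ω] (μ : Measure Ω)
    [IsProbabilityMeasure μ] (Y : Ω → ℝ) (hY : Measurable Y) (hInt : Integrable Y μ)
    (α : ℝ) (hα : α ∈ Set.Ioo (0 : ℝ) 1)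
    (F : ℝ → ℝ) (hF : ∀ β, F β = (μ {ω | Y ω ≤ β}).toReal)
    (q : ℝ) (hq : q = sInf {β : ℝ | α ≤ F β})
    (CVaRL : ℝ)
    (hC : CVaRL = (1 / α) *
      ((∫ ω, (if Y ω < q then Y ω else 0) ∂μ) + q * (α - (μ {ω | Y ω < q}).toReal))) :
    (α * CVaRL = q * α + ∫ ω, min (Y ω - q) 0 ∂μ) ∧
      ∀ β : ℝ, β * α + ∫ ω, min (Y ω - β) 0 ∂μ ≤ α * CVaRL :=
  cvar_lower_dual_general μ Y hInt α hα F hF q hq CVaRL hC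
end

section
/- If Y is a {0,1}-valued random variable with P(Y = 1) = p_Y, and s₀, s₁ > 0, then sup over β ∈ ℝ of (β·s₀ + s₁·E[min(Y − β, 0)]) = max(s₀ − s₁·(1 − p_Y), 0). -/
/-!
For binary `Y`, `E[g(Y)] = (1 - p_Y) g(0) + p_Y g(1)`, so the objective is the piecewise linear
function `β s₀` on `β ≤ 0`, `β (s₀ - s₁ (1 - p_Y))` on `[0, 1]` and `β (s₀ - s₁) + s₁ p_Y` on
`β ≥ 1`. As `0 < s₀ ≤ s₁`, it is nondecreasing before `0`, linear on `[0, 1]` and nonincreasing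
after `1`, so its supremum is the larger of its values `0` at `β = 0` and `s₀ - s₁ (1 - p_Y)` at
`β = 1`.
-/

open MeasureTheory

theorem integral_comp_of_forall_eq_zero_or_eq_one {Ω : Type*} [MeasurableSpace Ω]
    {μ : Measure Ω} [IsProbabilityMeasure μ] {Y : Ω → ℝ} (hY : Measurable Y)
    (hbin : ∀ ω, Y ω = 0 ∨ Y ω = 1) (g : ℝ → ℝ) :
    ∫ ω, g (Y ω) ∂μ = (1 - μ.real {ω | Y ω = 1}) * g 0 + μ.real {ω | Y ω = 1} * g 1 := by
  have hA : MeasurableSet {ω | Y ω = 1} := hY (measurableSet_singleton 1)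
  have hsplit : (fun ω => g (Y ω))
      = fun ω => g 0 + {ω | Y ω = 1}.indicator (fun _ => g 1 - g 0) ω := by
    funext ω
    rcases hbin ω with h | h <;> simp [h]
  rw [hsplit, integral_add (integrable_const _) ((integrable_const _).indicator hA),
    integral_const, integral_indicator_const _ hA]
  simp only [probReal_univ, smul_eq_mul]
  ring

/-- The lower Lee-bound objective `β s₀ + s₁ E[min(Y - β, 0)]` for binary `Y` with `P(Y = 1) = p`. -/
noncomputable def leeLowerObjective (p s₀ s₁ β : ℝ) : ℝ :=
  β * s₀ + s₁ * ((1 - p) * min (-β) 0 + p * min (1 - β) 0)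

namespace leeLowerObjective

variable {p s₀ s₁ : ℝ}

theorem at_zero : leeLowerObjective p s₀ s₁ 0 = 0 := by
  simp [leeLowerObjective]

theorem at_one : leeLowerObjective p s₀ s₁ 1 = s₀ - s₁ * (1 - p) := by
  rw [leeLowerObjective, sub_self, min_self, min_eq_left (by norm_num : (-1 : ℝ) ≤ 0)]
  ring

theorem le_max (hs₀ : 0 ≤ s₀) (hs : s₀ ≤ s₁) (β : ℝ) :
    leeLowerObjective p s₀ s₁ β ≤ max (s₀ - s₁ * (1 - p)) 0 := by
  unfold leeLowerObjective
  rcases le_total β 0 with hβ₀ | hβ₀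
  · rw [min_eq_right (by linarith), min_eq_right (by linarith)]
    nlinarith [le_max_right (s₀ - s₁ * (1 - p)) 0]
  rcases le_total β 1 with hβ₁ | hβ₁
  · rw [min_eq_left (by linarith), min_eq_right (by linarith)]
    rcases le_total (s₀ - s₁ * (1 - p)) 0 with hc | hc
    · nlinarith [le_max_right (s₀ - s₁ * (1 - p)) 0]
    · nlinarith [le_max_left (s₀ - s₁ * (1 - p)) 0]
  · rw [min_eq_left (by linarith), min_eq_left (by linarith)]
    nlinarith [le_max_left (s₀ - s₁ * (1 - p)) 0, mul_nonneg (sub_nonneg.2 hβ₁) (sub_nonneg.2 hs)]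

theorem iSup_eq (hs₀ : 0 ≤ s₀) (hs : s₀ ≤ s₁) :
    ⨆ β, leeLowerObjective p s₀ s₁ β = max (s₀ - s₁ * (1 - p)) 0 := by
  refine ciSup_eq_of_forall_le_of_forall_lt_exists_gt (le_max hs₀ hs) fun w hw => ?_
  rcases lt_max_iff.1 hw with h | h
  · exact ⟨1, at_one.symm ▸ h⟩
  · exact ⟨0, at_zero.symm ▸ h⟩

end leeLowerObjective

/-- Binary-outcome closed form for the lower trimming (Lee) bound numerator:
for a `{0,1}`-valued outcome `Y` with `P(Y=1) = p_Y` and `s₀, s₁ > 0` (with the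
always-takers share `p = s₀/s₁ ∈ (0,1]`),
`sup_{β ∈ ℝ} (β·s₀ + s₁·E[min(Y − β, 0)]) = max(s₀ − s₁·(1 − p_Y), 0)`. -/
theorem lee_binary_lower {Ω : Type*} [MeasurableSpace Ω] (μ : Measure Ω)
    [IsProbabilityMeasure μ] (Y : Ω → ℝ) (hY : Measurable Y)
    (hbin : ∀ ω, Y ω = 0 ∨ Y ω = 1)
    (pY s₀ s₁ : ℝ) (hpY : pY = (μ {ω | Y ω = 1}).toReal)
    (hs₀ : 0 < s₀) (hs₁ : 0 < s₁) (hp : s₀ / s₁ ≤ 1) :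
    (⨆ β : ℝ, (β * s₀ + s₁ * ∫ ω, min (Y ω - β) 0 ∂μ)) =
      max (s₀ - s₁ * (1 - pY)) 0 := by
  have hs : s₀ ≤ s₁ := by simpa using (div_le_one hs₁).mp hp
  have hintegral (β : ℝ) :
      ∫ ω, min (Y ω - β) 0 ∂μ = (1 - pY) * min (-β) 0 + pY * min (1 - β) 0 := by
    rw [integral_comp_of_forall_eq_zero_or_eq_one hY hbin (fun y => min (y - β) 0), hpY,
      measureReal_def]
    norm_num
  simp_rw [hintegral]
  exact leeLowerObjective.iSup_eq hs₀.le hs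
end
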